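/- For the qutrit perfect tensor channel E with E(μ^α) = λ_α μ^α, the symmetric traceless matrix μ^{β³} with (μ^{β³})_{01} = (μ^{β³})_{10} = 1 and all other entries 0 satisfies E(μ^{β³}) = (1/2) μ^{β³}, and the antisymmetric matrix μ^{α³} with (μ^{α³})_{10} = 1, (μ^{α³})_{01} = −1 and zeros elsewhere satisfies E(μ^{α³}) = −(1/2) μ^{α³}. -/

import Mathlib

open Matrix Kronecker

/-!
Each nonzero entry of `V` is `1/√2` and sits at a triple `(j, k, l)` that is a permutation of
`{0, 1, 2}`, so two of the indices determine the third. Hence `E(X)_{lm} = X_{ml}/2` for `l ≠ m`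
and `E(X)_{ll} = (tr X - X_{ll})/2`: on matrices with zero diagonal `E` is half the transpose,
so symmetric ones are eigenvectors for `1/2` and antisymmetric ones for `-1/2`.
-/

/-- The qutrit three-leg perfect tensor. -/
noncomputable def perfectV : Matrix (Fin 3 × Fin 3) (Fin 3) ℂ :=
  fun jk l =>
    if jk.1 = jk.2 ∨ jk.2 = l ∨ l = jk.1 then 0
    else (1 : ℂ) / Real.sqrt 2

/-- The ascending map `E(X) = V†(X ⊗ I)V`. -/
noncomputable def ascendE (X : Matrix (Fin 3) (Fin 3) ℂ) : Matrix (Fin 3) (Fin 3) ℂ :=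
  perfectVᴴ * (X ⊗ₖ (1 : Matrix (Fin 3) (Fin 3) ℂ)) * perfectV

namespace Matrix

theorem conjTranspose_mul_kronecker_one_mul_apply {R m n p : Type*} [Fintype m] [Fintype n]
    [DecidableEq n] [Semiring R] [StarRing R]
    (V : Matrix (m × n) p R) (X : Matrix m m R) (l l' : p) :
    (Vᴴ * (X ⊗ₖ (1 : Matrix n n R)) * V) l l' =
      ∑ k, ∑ j, ∑ j', star (V (j, k) l) * X j j' * V (j', k) l' := by
  simp only [mul_apply, conjTranspose_apply, kroneckerMap_apply, one_apply, mul_ite, mul_one,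
    mul_zero, Fintype.sum_prod_type, Finset.sum_mul, Finset.sum_ite_eq', Finset.mem_univ, if_true]
  rw [Finset.sum_comm]
  exact Finset.sum_congr rfl fun _ _ => Finset.sum_comm

end Matrix

lemma ofReal_sqrt_two_inv_mul_mul_inv (a : ℂ) :
    (Real.sqrt 2 : ℂ)⁻¹ * a * (Real.sqrt 2 : ℂ)⁻¹ = a / 2 := by
  rw [mul_right_comm, ← mul_inv, ← Complex.ofReal_mul, Real.mul_self_sqrt zero_le_two]
  push_cast
  ring

theorem ascendE_apply_of_ne (X : Matrix (Fin 3) (Fin 3) ℂ) {l m : Fin 3} (h : l ≠ m) :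
    ascendE X l m = X m l / 2 := by
  rw [ascendE, conjTranspose_mul_kronecker_one_mul_apply]
  fin_cases l <;> fin_cases m <;>
    simp [Fin.sum_univ_three, perfectV, ofReal_sqrt_two_inv_mul_mul_inv] at h ⊢

theorem ascendE_apply_self (X : Matrix (Fin 3) (Fin 3) ℂ) (l : Fin 3) :
    ascendE X l l = (trace X - X l l) / 2 := by
  rw [ascendE, conjTranspose_mul_kronecker_one_mul_apply, trace, Fin.sum_univ_three]
  fin_cases l <;> simp [Fin.sum_univ_three, perfectV, ofReal_sqrt_two_inv_mul_mul_inv] <;> ring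

theorem ascendE_of_diag_eq_zero {X : Matrix (Fin 3) (Fin 3) ℂ} (hX : ∀ i, X i i = 0) :
    ascendE X = (1 / 2 : ℂ) • Xᵀ := by
  ext l m
  rcases eq_or_ne l m with rfl | hlm
  · simp [ascendE_apply_self, trace, hX]
  · rw [ascendE_apply_of_ne X hlm, Matrix.smul_apply, transpose_apply, smul_eq_mul]
    ring

theorem ascendE_eq_half_smul_of_isSymm {X : Matrix (Fin 3) (Fin 3) ℂ} (hX : X.IsSymm)
    (hdiag : ∀ i, X i i = 0) : ascendE X = (1 / 2 : ℂ) • X := by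
  rw [ascendE_of_diag_eq_zero hdiag, hX.eq]

theorem ascendE_eq_neg_half_smul_of_transpose_eq_neg {X : Matrix (Fin 3) (Fin 3) ℂ}
    (hX : Xᵀ = -X) : ascendE X = -(1 / 2 : ℂ) • X := by
  have hdiag (i : Fin 3) : X i i = 0 := by
    have := congr_fun (congr_fun hX i) i
    simp only [transpose_apply, Matrix.neg_apply] at this
    linear_combination this / 2
  rw [ascendE_of_diag_eq_zero hdiag, hX, smul_neg, neg_smul]

/-- The symmetric matrix `μ^{β³}` is an eigenvector of `E` with eigenvalue `1/2`,
and the antisymmetric matrix `μ^{α³}` is an eigenvector with eigenvalue `−1/2`. -/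
theorem ascendE_eigenvectors :
    ascendE !![0, 1, 0; 1, 0, 0; 0, 0, 0] =
      (1 / 2 : ℂ) • !![0, 1, 0; 1, 0, 0; 0, 0, 0] ∧
    ascendE !![0, -1, 0; 1, 0, 0; 0, 0, 0] =
      (-(1 / 2) : ℂ) • !![0, -1, 0; 1, 0, 0; 0, 0, 0] := by
  refine ⟨ascendE_eq_half_smul_of_isSymm ?_ ?_, ascendE_eq_neg_half_smul_of_transpose_eq_neg ?_⟩
  · exact IsSymm.ext fun i j => by fin_cases i <;> fin_cases j <;> rfl
  · intro i; fin_cases i <;> rfl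
  · ext i j; fin_cases i <;> fin_cases j <;> simp
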